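/- arXiv:2603.10279 — 4 statements merged into one kernel-verified Lean document; each statement's English description precedes it below -/
import Mathlib

section
/- Let A be a finite set, π_β a full-support distribution on A, r̂ : A → ℝ, λ > 0, and π_λ(a) ∝ π_β(a)·exp(r̂(a)/λ). If r̂(a) = r*(a) + ξ(a) with |ξ(a)| ≤ ε for all a, then Σ_a π_λ(a)·r*(a) ≥ Σ_a π_β(a)·r*(a) − 2ε. -/
open Real Finset

lemma cheb_weighted {A : Type*} [Fintype A] (w f g : A → ℝ) (hw : ∀ a, 0 ≤ w a)
    (hfg : ∀ a b, 0 ≤ (f a - f b) * (g a - g b)) :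
    (∑ a, w a * f a) * (∑ a, w a * g a) ≤ (∑ a, w a) * ∑ a, w a * (f a * g a) := by
  have h : 0 ≤ ∑ a, ∑ b, w a * w b * ((f a - f b) * (g a - g b)) :=
    Finset.sum_nonneg fun a _ => Finset.sum_nonneg fun b _ =>
      mul_nonneg (mul_nonneg (hw a) (hw b)) (hfg a b)
  have expand : ∑ a, ∑ b, w a * w b * ((f a - f b) * (g a - g b))
      = 2 * ((∑ a, w a) * (∑ a, w a * (f a * g a))
        - (∑ a, w a * f a) * (∑ a, w a * g a)) := by
    have key : ∀ a b : A, w a * w b * ((f a - f b) * (g a - g b))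
        = (w a * (w b * (f b * g b)) + (w a * (f a * g a)) * w b)
          - ((w a * f a) * (w b * g b) + (w a * g a) * (w b * f b)) := by
      intro a b; ring
    simp only [key, Finset.sum_sub_distrib, Finset.sum_add_distrib,
      ← Finset.mul_sum, ← Finset.sum_mul]
    ring
  linarith [h.trans_eq expand]

theorem noisy_policy_improvement
    {A : Type*} [Fintype A]
    (πβ : A → ℝ) (hpos : ∀ a, 0 < πβ a) (hsum : ∑ a, πβ a = 1)
    (rhat rstar ξ : A → ℝ) (ε : ℝ)
    (hnoise : ∀ a, rhat a = rstar a + ξ a) (hξ : ∀ a, |ξ a| ≤ ε)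
    (lam : ℝ) (hlam : 0 < lam)
    (πl : A → ℝ)
    (hπl : ∀ a, πl a = πβ a * Real.exp (rhat a / lam)
      / ∑ a', πβ a' * Real.exp (rhat a' / lam)) :
    ∑ a, πβ a * rstar a - 2 * ε ≤ ∑ a, πl a * rstar a := by
  set f : A → ℝ := fun a => Real.exp (rhat a / lam) with hf
  set Z : ℝ := ∑ a', πβ a' * Real.exp (rhat a' / lam) with hZ
  have hne : Nonempty A := by
    rcases isEmpty_or_nonempty A with h | h
    · simp at hsum
    · exact h
  have hZpos : 0 < Z := by
    rw [hZ]
    exact Finset.sum_pos (fun a _ => mul_pos (hpos a) (Real.exp_pos _)) Finset.univ_nonempty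
  have hpl_nonneg : ∀ a, 0 ≤ πl a := fun a => by
    rw [hπl a]
    exact div_nonneg (mul_nonneg (hpos a).le (Real.exp_pos _).le) hZpos.le
  have hpl_sum : ∑ a, πl a = 1 := by
    simp only [hπl]
    rw [← Finset.sum_div, div_self hZpos.ne']
  -- noise bound for any probability distribution p
  have noise_bound : ∀ p : A → ℝ, (∀ a, 0 ≤ p a) → ∑ a, p a = 1 →
      ∑ a, p a * ξ a ≤ ε ∧ -ε ≤ ∑ a, p a * ξ a := by
    intro p hp hps
    constructor
    · calc ∑ a, p a * ξ a ≤ ∑ a, p a * ε := by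
            apply Finset.sum_le_sum
            intro a _
            exact mul_le_mul_of_nonneg_left ((le_abs_self _).trans (hξ a)) (hp a)
        _ = ε := by rw [← Finset.sum_mul, hps, one_mul]
    · calc -ε = ∑ a, p a * (-ε) := by rw [← Finset.sum_mul, hps, one_mul]
        _ ≤ ∑ a, p a * ξ a := by
            apply Finset.sum_le_sum
            intro a _
            exact mul_le_mul_of_nonneg_left (neg_le_of_abs_le (hξ a)) (hp a)
  -- Chebyshev: tilting increases expected rhat
  have cheb := cheb_weighted πβ f rhat (fun a => (hpos a).le)
    (fun a b => by
      rcases le_total (rhat a) (rhat b) with h | h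
      · have : f a ≤ f b := Real.exp_le_exp.mpr (div_le_div_of_nonneg_right h hlam.le)
        nlinarith
      · have : f b ≤ f a := Real.exp_le_exp.mpr (div_le_div_of_nonneg_right h hlam.le)
        nlinarith)
  rw [hsum, one_mul] at cheb
  have step1 : ∑ a, πβ a * rhat a ≤ ∑ a, πl a * rhat a := by
    have : ∑ a, πl a * rhat a = (∑ a, πβ a * (f a * rhat a)) / Z := by
      rw [Finset.sum_div]
      exact Finset.sum_congr rfl fun a _ => by rw [hπl a]; ring
    rw [this, le_div_iff₀ hZpos]
    calc (∑ a, πβ a * rhat a) * Z = (∑ a, πβ a * f a) * (∑ a, πβ a * rhat a) := by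
          rw [hZ]; ring
      _ ≤ ∑ a, πβ a * (f a * rhat a) := cheb
  -- convert between rhat and rstar
  have hβ := noise_bound πβ (fun a => (hpos a).le) hsum
  have hl := noise_bound πl hpl_nonneg hpl_sum
  have e1 : ∑ a, πβ a * rhat a = ∑ a, πβ a * rstar a + ∑ a, πβ a * ξ a := by
    rw [← Finset.sum_add_distrib]
    apply Finset.sum_congr rfl
    intro a _; rw [hnoise a]; ring
  have e2 : ∑ a, πl a * rhat a = ∑ a, πl a * rstar a + ∑ a, πl a * ξ a := by
    rw [← Finset.sum_add_distrib]
    apply Finset.sum_congr rfl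
    intro a _; rw [hnoise a]; ring
  linarith [hβ.2, hl.1]
end

section
/- Let A be a finite set, π_β a full-support distribution on A, r*, ξ : A → ℝ with |ξ(a)| ≤ ε, λ > 0. Let π*_λ(a) ∝ π_β(a)·exp(r*(a)/λ) and π_λ(a) ∝ π_β(a)·exp((r*(a)+ξ(a))/λ). Then the total variation distance satisfies D_TV(π*_λ, π_λ) ≤ (exp(2ε/λ) − 1)/2. -/
open Real Finset

private lemma tilt_aux {A : Type*} [Fintype A] [Nonempty A]
    (w : A → ℝ) (hw : ∀ a, 0 < w a) (δ : A → ℝ) (c : ℝ) (hc : ∀ a, |δ a| ≤ c) (a : A) :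
    (w a * Real.exp (δ a)) / (∑ a', w a' * Real.exp (δ a')) ≤
      Real.exp (2 * c) * (w a / ∑ a', w a') := by
  have hS : 0 < ∑ a', w a' := Finset.sum_pos (fun i _ => hw i) Finset.univ_nonempty
  have hT : 0 < ∑ a', w a' * Real.exp (δ a') :=
    Finset.sum_pos (fun i _ => mul_pos (hw i) (Real.exp_pos _)) Finset.univ_nonempty
  have hnum : w a * Real.exp (δ a) ≤ w a * Real.exp c :=
    mul_le_mul_of_nonneg_left (Real.exp_le_exp.2 ((abs_le.1 (hc a)).2)) (hw a).le
  have hden : Real.exp (-c) * ∑ a', w a' ≤ ∑ a', w a' * Real.exp (δ a') := by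
    rw [Finset.mul_sum]
    refine Finset.sum_le_sum fun i _ => ?_
    rw [mul_comm (Real.exp (-c))]
    exact mul_le_mul_of_nonneg_left (Real.exp_le_exp.2 ((abs_le.1 (hc i)).1)) (hw i).le
  calc (w a * Real.exp (δ a)) / (∑ a', w a' * Real.exp (δ a'))
      ≤ (w a * Real.exp c) / (Real.exp (-c) * ∑ a', w a') := by
        apply div_le_div₀ ((mul_pos (hw a) (Real.exp_pos _)).le) hnum (mul_pos (Real.exp_pos _) hS) hden
    _ = Real.exp (2 * c) * (w a / ∑ a', w a') := by
        rw [Real.exp_neg, two_mul, Real.exp_add]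
        field_simp

theorem tv_bound_noisy_tilt
    {A : Type*} [Fintype A]
    (πβ : A → ℝ) (hpos : ∀ a, 0 < πβ a) (hsum : ∑ a, πβ a = 1)
    (rstar ξ : A → ℝ) (ε : ℝ) (hξ : ∀ a, |ξ a| ≤ ε)
    (lam : ℝ) (hlam : 0 < lam)
    (πstar πl : A → ℝ)
    (hπstar : ∀ a, πstar a = πβ a * Real.exp (rstar a / lam)
      / ∑ a', πβ a' * Real.exp (rstar a' / lam))
    (hπl : ∀ a, πl a = πβ a * Real.exp ((rstar a + ξ a) / lam)
      / ∑ a', πβ a' * Real.exp ((rstar a' + ξ a') / lam)) :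
    (1 / 2) * ∑ a, |πstar a - πl a| ≤ (Real.exp (2 * ε / lam) - 1) / 2 := by
  have hA : Nonempty A := by
    by_contra h
    rw [not_nonempty_iff] at h
    simp at hsum
  set u : A → ℝ := fun a => πβ a * Real.exp (rstar a / lam) with hu
  set v : A → ℝ := fun a => πβ a * Real.exp ((rstar a + ξ a) / lam) with hv
  have hwu : ∀ a, 0 < u a := fun a => mul_pos (hpos a) (Real.exp_pos _)
  have hwv : ∀ a, 0 < v a := fun a => mul_pos (hpos a) (Real.exp_pos _)
  have hS : 0 < ∑ a', u a' := Finset.sum_pos (fun i _ => hwu i) Finset.univ_nonempty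
  have hT : 0 < ∑ a', v a' := Finset.sum_pos (fun i _ => hwv i) Finset.univ_nonempty
  have hc : ∀ a, |ξ a / lam| ≤ ε / lam := fun a => by
    rw [abs_div, abs_of_pos hlam]
    exact div_le_div_of_nonneg_right (hξ a) hlam.le
  have hc' : ∀ a, |(-(ξ a / lam))| ≤ ε / lam := fun a => by
    rw [abs_neg]; exact hc a
  have hvu : ∀ a, v a = u a * Real.exp (ξ a / lam) := fun a => by
    simp only [hu, hv, mul_assoc, ← Real.exp_add, ← add_div]
  have huv : ∀ a, u a = v a * Real.exp (-(ξ a / lam)) := fun a => by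
    rw [hvu a, mul_assoc, ← Real.exp_add]
    simp
  have hes : Real.exp (2 * (ε / lam)) = Real.exp (2 * ε / lam) := by
    rw [mul_div_assoc]
  -- key ratio bounds
  have key1 : ∀ a, πl a ≤ Real.exp (2 * ε / lam) * πstar a := by
    intro a
    rw [hπl a, hπstar a, ← hes]
    have := tilt_aux u hwu (fun a => ξ a / lam) (ε / lam) hc a
    simp only [← hvu] at this
    exact this
  have key2 : ∀ a, πstar a ≤ Real.exp (2 * ε / lam) * πl a := by
    intro a
    rw [hπl a, hπstar a, ← hes]
    have := tilt_aux v hwv (fun a => -(ξ a / lam)) (ε / lam) hc' a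
    simp only [← huv] at this
    exact this
  have hε : 0 ≤ ε := le_trans (abs_nonneg _) (hξ (Classical.arbitrary A))
  have he1 : (1 : ℝ) ≤ Real.exp (2 * ε / lam) := by
    rw [← Real.exp_zero]
    exact Real.exp_le_exp.2 (by positivity)
  have hps : ∀ a, 0 ≤ πstar a := fun a => by
    rw [hπstar a]; exact div_nonneg (hwu a).le hS.le
  have hls : ∀ a, 0 ≤ πl a := fun a => by
    rw [hπl a]; exact div_nonneg (hwv a).le hT.le
  have hsum_star : ∑ a, πstar a = 1 := by
    simp only [hπstar]
    rw [← Finset.sum_div, div_self hS.ne']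
  -- pointwise bound
  have hpt : ∀ a, |πstar a - πl a| ≤ (Real.exp (2 * ε / lam) - 1) * min (πstar a) (πl a) := by
    intro a
    rcases le_total (πstar a) (πl a) with h | h
    · rw [abs_sub_comm, abs_of_nonneg (sub_nonneg.2 h), min_eq_left h]
      have := key1 a
      nlinarith
    · rw [abs_of_nonneg (sub_nonneg.2 h), min_eq_right h]
      have := key2 a
      nlinarith
  have hmin : ∑ a, min (πstar a) (πl a) ≤ 1 := by
    rw [← hsum_star]
    exact Finset.sum_le_sum fun a _ => min_le_left _ _
  have hbound : ∑ a, |πstar a - πl a| ≤ Real.exp (2 * ε / lam) - 1 := by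
    calc ∑ a, |πstar a - πl a|
        ≤ ∑ a, (Real.exp (2 * ε / lam) - 1) * min (πstar a) (πl a) :=
          Finset.sum_le_sum fun a _ => hpt a
      _ = (Real.exp (2 * ε / lam) - 1) * ∑ a, min (πstar a) (πl a) := by
          rw [Finset.mul_sum]
      _ ≤ (Real.exp (2 * ε / lam) - 1) * 1 :=
          mul_le_mul_of_nonneg_left hmin (by linarith)
      _ = Real.exp (2 * ε / lam) - 1 := mul_one _
  linarith
end

section
/- Let A be finite, π_β full-support on A, r* : A → [0, R_max], ξ : A → ℝ with |ξ(a)| ≤ ε, λ > 0, and π_λ(a) ∝ π_β(a)·exp((r*(a)+ξ(a))/λ). Then Σ_a π_λ(a)·r*(a) ≥ Σ_a π_β(a)·r*(a) − R_max·(exp(2ε/λ) − 1). -/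
open Real Finset

theorem temperature_dependent_improvement
    {A : Type*} [Fintype A]
    (πβ : A → ℝ) (hpos : ∀ a, 0 < πβ a) (hsum : ∑ a, πβ a = 1)
    (rstar ξ : A → ℝ) (Rmax ε : ℝ)
    (hr : ∀ a, 0 ≤ rstar a ∧ rstar a ≤ Rmax) (hξ : ∀ a, |ξ a| ≤ ε)
    (lam : ℝ) (hlam : 0 < lam)
    (πl : A → ℝ)
    (hπl : ∀ a, πl a = πβ a * Real.exp ((rstar a + ξ a) / lam)
      / ∑ a', πβ a' * Real.exp ((rstar a' + ξ a') / lam)) :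
    ∑ a, πβ a * rstar a - Rmax * (Real.exp (2 * ε / lam) - 1)
      ≤ ∑ a, πl a * rstar a := by
  classical
  -- nonempty
  have huniv : (Finset.univ : Finset A).Nonempty := by
    rcases (Finset.univ : Finset A).eq_empty_or_nonempty with h | h
    · rw [h] at hsum; simp at hsum
    · exact h
  obtain ⟨a₀, _⟩ := huniv
  have hε : 0 ≤ ε := le_trans (abs_nonneg _) (hξ a₀)
  have hRmax : 0 ≤ Rmax := le_trans (hr a₀).1 (hr a₀).2
  set R : A → ℝ := fun a => Real.exp (rstar a / lam) with hR
  set w : A → ℝ := fun a => πβ a * Real.exp ((rstar a + ξ a) / lam) with hw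
  set v : A → ℝ := fun a => πβ a * R a with hv
  set Z : ℝ := ∑ a, w a with hZ
  set Z0 : ℝ := ∑ a, v a with hZ0
  set S : ℝ := ∑ a, πβ a * rstar a with hS
  set T : ℝ := ∑ a, v a * rstar a with hT
  have hwv : ∀ a, w a = v a * Real.exp (ξ a / lam) := by
    intro a
    simp only [hw, hv, hR, mul_assoc, ← Real.exp_add, add_div]
  have hZpos : 0 < Z := Finset.sum_pos (fun a _ => mul_pos (hpos a) (Real.exp_pos _)) ⟨a₀, Finset.mem_univ a₀⟩
  have hZ0pos : 0 < Z0 := Finset.sum_pos (fun a _ => mul_pos (hpos a) (Real.exp_pos _)) ⟨a₀, Finset.mem_univ a₀⟩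
  have hvpos : ∀ a, 0 < v a := fun a => mul_pos (hpos a) (Real.exp_pos _)
  -- Z ≤ exp(ε/lam) * Z0
  have hZle : Z ≤ Real.exp (ε / lam) * Z0 := by
    rw [hZ, hZ0, Finset.mul_sum]
    refine Finset.sum_le_sum (fun a _ => ?_)
    rw [hwv a, mul_comm (Real.exp (ε / lam)) (v a)]
    refine mul_le_mul_of_nonneg_left ?_ (le_of_lt (hvpos a))
    exact Real.exp_le_exp.2 (div_le_div_of_nonneg_right (le_trans (le_abs_self _) (hξ a)) hlam.le)
  -- ∑ w r ≥ exp(-(ε/lam)) * T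
  have hwr : Real.exp (-(ε / lam)) * T ≤ ∑ a, w a * rstar a := by
    rw [hT, Finset.mul_sum]
    refine Finset.sum_le_sum (fun a _ => ?_)
    rw [hwv a]
    have h1 : Real.exp (-(ε / lam)) ≤ Real.exp (ξ a / lam) := by
      refine Real.exp_le_exp.2 ?_
      rw [neg_div']
      exact div_le_div_of_nonneg_right (neg_le_of_abs_le (hξ a)) hlam.le
    have := mul_le_mul_of_nonneg_left h1 (le_of_lt (hvpos a))
    calc Real.exp (-(ε / lam)) * (v a * rstar a)
        = (v a * Real.exp (-(ε / lam))) * rstar a := by ring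
      _ ≤ (v a * Real.exp (ξ a / lam)) * rstar a :=
          mul_le_mul_of_nonneg_right this (hr a).1
  -- Chebyshev: S * Z0 ≤ T
  have cheb : S * Z0 ≤ T := by
    have key : 0 ≤ ∑ a, ∑ b, πβ a * πβ b * ((rstar a - rstar b) * (R a - R b)) := by
      refine Finset.sum_nonneg (fun a _ => Finset.sum_nonneg (fun b _ => ?_))
      refine mul_nonneg (mul_nonneg (le_of_lt (hpos a)) (le_of_lt (hpos b))) ?_
      rcases le_total (rstar a) (rstar b) with h | h
      · have hRle : R a ≤ R b := Real.exp_le_exp.2 (div_le_div_of_nonneg_right h hlam.le)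
        nlinarith
      · have hRle : R b ≤ R a := Real.exp_le_exp.2 (div_le_div_of_nonneg_right h hlam.le)
        exact mul_nonneg (by linarith) (by linarith)
    have expand : ∑ a, ∑ b, πβ a * πβ b * ((rstar a - rstar b) * (R a - R b))
        = 2 * T - 2 * (S * Z0) := by
      have h1 : ∀ a b, πβ a * πβ b * ((rstar a - rstar b) * (R a - R b))
          = (πβ a * rstar a * R a) * πβ b + πβ a * (πβ b * rstar b * R b)
            - (πβ a * rstar a) * (πβ b * R b) - (πβ a * R a) * (πβ b * rstar b) := by
        intro a b; ring
      simp only [h1, Finset.sum_sub_distrib, Finset.sum_add_distrib,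
        ← Finset.mul_sum, ← Finset.sum_mul, hsum]
      have e1 : ∑ b, πβ b * rstar b * R b = T := by
        rw [hT]; refine Finset.sum_congr rfl (fun b _ => ?_); rw [hv]; ring
      have e2 : ∑ b, πβ b * R b = Z0 := by rw [hZ0]
      have e3 : ∑ b, πβ b * rstar b = S := by rw [hS]
      rw [e2, e3]
      have e4 : ∑ a, πβ a * rstar a * R a = T := e1
      rw [e4]
      ring
    linarith
  -- main chain
  have hsum_pl : ∑ a, πl a * rstar a = (∑ a, w a * rstar a) / Z := by
    rw [Finset.sum_div]
    refine Finset.sum_congr rfl (fun a _ => ?_)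
    rw [hπl a, div_mul_eq_mul_div]
  have hmain : Real.exp (-(ε / lam)) * T / (Real.exp (ε / lam) * Z0)
      ≤ (∑ a, w a * rstar a) / Z := by
    refine div_le_div₀ (Finset.sum_nonneg (fun a _ => mul_nonneg
      (mul_nonneg (le_of_lt (hpos a)) (le_of_lt (Real.exp_pos _))) (hr a).1)) hwr hZpos hZle
  have hTS : S ≤ T / Z0 := by
    rw [le_div_iff₀ hZ0pos]; exact cheb
  have hrw : Real.exp (-(ε / lam)) * T / (Real.exp (ε / lam) * Z0)
      = Real.exp (-(2 * ε / lam)) * (T / Z0) := by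
    rw [show -(2 * ε / lam) = -(ε / lam) - ε / lam by ring, Real.exp_sub]
    field_simp
  have hfin : Real.exp (-(2 * ε / lam)) * S ≤ Real.exp (-(2 * ε / lam)) * (T / Z0) :=
    mul_le_mul_of_nonneg_left hTS (le_of_lt (Real.exp_pos _))
  have hS0 : 0 ≤ S := Finset.sum_nonneg (fun a _ => mul_nonneg (le_of_lt (hpos a)) (hr a).1)
  have hSR : S ≤ Rmax := by
    have : S ≤ ∑ a, πβ a * Rmax :=
      Finset.sum_le_sum (fun a _ => mul_le_mul_of_nonneg_left (hr a).2 (le_of_lt (hpos a)))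
    rwa [← Finset.sum_mul, hsum, one_mul] at this
  have hlast : S - Rmax * (Real.exp (2 * ε / lam) - 1) ≤ Real.exp (-(2 * ε / lam)) * S := by
    set E := Real.exp (2 * ε / lam) with hE
    have hE1 : 1 ≤ E := Real.one_le_exp (by positivity)
    have hEpos : 0 < E := Real.exp_pos _
    have hinv : Real.exp (-(2 * ε / lam)) = E⁻¹ := by rw [Real.exp_neg]
    rw [hinv]
    rw [inv_mul_eq_div, le_div_iff₀ hEpos]
    nlinarith [mul_le_mul_of_nonneg_right hSR (sub_nonneg.2 hE1),
      mul_nonneg hRmax (sub_nonneg.2 hE1)]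
  calc S - Rmax * (Real.exp (2 * ε / lam) - 1)
      ≤ Real.exp (-(2 * ε / lam)) * S := hlast
    _ ≤ Real.exp (-(2 * ε / lam)) * (T / Z0) := hfin
    _ = Real.exp (-(ε / lam)) * T / (Real.exp (ε / lam) * Z0) := hrw.symm
    _ ≤ (∑ a, w a * rstar a) / Z := hmain
    _ = ∑ a, πl a * rstar a := hsum_pl.symm
end

section
/- Under the assumptions of the previous statement, if additionally λ ≥ 2ε, then Σ_a π_λ(a)·r*(a) ≥ Σ_a π_β(a)·r*(a) − 4·R_max·ε/λ. -/
open Real Finset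

/-- Weighted Chebyshev sum inequality for monovarying pairs. -/
lemma weighted_chebyshev {A : Type*} [Fintype A] (w f g : A → ℝ)
    (hw : ∀ a, 0 ≤ w a) (hw1 : ∑ a, w a = 1)
    (hfg : ∀ a b, 0 ≤ (f a - f b) * (g a - g b)) :
    (∑ a, w a * f a) * (∑ a, w a * g a) ≤ ∑ a, w a * (f a * g a) := by
  have key : 0 ≤ ∑ a, ∑ b, w a * w b * ((f a - f b) * (g a - g b)) :=
    Finset.sum_nonneg fun a _ => Finset.sum_nonneg fun b _ =>
      mul_nonneg (mul_nonneg (hw a) (hw b)) (hfg a b)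
  have expand : ∑ a, ∑ b, w a * w b * ((f a - f b) * (g a - g b))
      = 2 * (∑ a, w a * (f a * g a)) - 2 * ((∑ a, w a * f a) * (∑ a, w a * g a)) := by
    have h1 : ∀ a : A, ∑ b, w a * w b * ((f a - f b) * (g a - g b))
        = w a * (f a * g a) * (∑ b, w b) + (∑ b, w b * (f b * g b)) * w a
          - (w a * f a) * (∑ b, w b * g b) - (∑ b, w b * f b) * (w a * g a) := by
      intro a
      rw [Finset.mul_sum, Finset.sum_mul, Finset.mul_sum, Finset.sum_mul,
        ← Finset.sum_add_distrib, ← Finset.sum_sub_distrib, ← Finset.sum_sub_distrib]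
      exact Finset.sum_congr rfl fun b _ => by ring
    rw [Finset.sum_congr rfl fun a _ => h1 a]
    simp only [hw1, mul_one]
    rw [Finset.sum_sub_distrib, Finset.sum_sub_distrib, Finset.sum_add_distrib,
      ← Finset.mul_sum, ← Finset.sum_mul, ← Finset.mul_sum, hw1]
    ring
  linarith

theorem linearized_temperature_bound
    {A : Type*} [Fintype A]
    (πβ : A → ℝ) (hpos : ∀ a, 0 < πβ a) (hsum : ∑ a, πβ a = 1)
    (rstar ξ : A → ℝ) (Rmax ε : ℝ)
    (hr : ∀ a, 0 ≤ rstar a ∧ rstar a ≤ Rmax) (hξ : ∀ a, |ξ a| ≤ ε)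
    (lam : ℝ) (hlam : 0 < lam) (hlam2 : 2 * ε ≤ lam)
    (πl : A → ℝ)
    (hπl : ∀ a, πl a = πβ a * Real.exp ((rstar a + ξ a) / lam)
      / ∑ a', πβ a' * Real.exp ((rstar a' + ξ a') / lam)) :
    ∑ a, πβ a * rstar a - 4 * Rmax * ε / lam ≤ ∑ a, πl a * rstar a := by
  -- A is nonempty
  cases isEmpty_or_nonempty A with
  | inl h => simp [Finset.univ_eq_empty] at hsum
  | inr h =>
  haveI := h
  obtain ⟨a0⟩ := h
  have hε : 0 ≤ ε := le_trans (abs_nonneg _) (hξ a0)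
  have hR : 0 ≤ Rmax := le_trans (hr a0).1 (hr a0).2
  set W : ℝ := ∑ a, πβ a * Real.exp (rstar a / lam) with hW
  set Z : ℝ := ∑ a', πβ a' * Real.exp ((rstar a' + ξ a') / lam) with hZ
  have hWpos : 0 < W := Finset.sum_pos (fun a _ => mul_pos (hpos a) (Real.exp_pos _)) Finset.univ_nonempty
  have hZpos : 0 < Z := Finset.sum_pos (fun a _ => mul_pos (hpos a) (Real.exp_pos _)) Finset.univ_nonempty
  -- Z ≤ exp(ε/lam) * W
  have hZle : Z ≤ Real.exp (ε / lam) * W := by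
    rw [hZ, hW, Finset.mul_sum]
    refine Finset.sum_le_sum fun a _ => ?_
    rw [mul_left_comm, ← Real.exp_add]
    refine mul_le_mul_of_nonneg_left ?_ (hpos a).le
    apply Real.exp_le_exp.2
    rw [← add_div]
    exact (div_le_div_iff_of_pos_right hlam).2 (by linarith [(abs_le.1 (hξ a)).2])
  -- pointwise lower bound on πl
  have hpoint : ∀ a, Real.exp (-(2 * ε) / lam) / W * (πβ a * Real.exp (rstar a / lam)) ≤ πl a := by
    intro a
    rw [hπl a]
    have heq : Real.exp (-(2 * ε) / lam) / W * (πβ a * Real.exp (rstar a / lam))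
        = (πβ a * Real.exp ((rstar a - ε) / lam)) / (Real.exp (ε / lam) * W) := by
      rw [div_mul_eq_mul_div, div_eq_div_iff hWpos.ne' (by positivity)]
      have e1 : Real.exp (-(2 * ε) / lam) * Real.exp (rstar a / lam) * Real.exp (ε / lam)
          = Real.exp ((rstar a - ε) / lam) := by
        rw [← Real.exp_add, ← Real.exp_add]
        congr 1
        ring
      linear_combination (πβ a * W) * e1
    rw [heq]
    apply div_le_div₀ (mul_pos (hpos a) (Real.exp_pos _)).le ?_ hZpos hZle
    refine mul_le_mul_of_nonneg_left ?_ (hpos a).le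
    apply Real.exp_le_exp.2
    exact (div_le_div_iff_of_pos_right hlam).2 (by linarith [(abs_le.1 (hξ a)).1])
  -- sum lower bound
  have hsum1 : Real.exp (-(2 * ε) / lam) / W * (∑ a, πβ a * (rstar a * Real.exp (rstar a / lam)))
      ≤ ∑ a, πl a * rstar a := by
    rw [Finset.mul_sum]
    refine Finset.sum_le_sum fun a _ => ?_
    have := mul_le_mul_of_nonneg_right (hpoint a) (hr a).1
    calc Real.exp (-(2 * ε) / lam) / W * (πβ a * (rstar a * Real.exp (rstar a / lam)))
        = Real.exp (-(2 * ε) / lam) / W * (πβ a * Real.exp (rstar a / lam)) * rstar a := by ring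
      _ ≤ πl a * rstar a := this
  -- Chebyshev: ∑ πβ r e^{r/λ} ≥ (∑ πβ r) * W
  have hcheb : (∑ a, πβ a * rstar a) * W ≤ ∑ a, πβ a * (rstar a * Real.exp (rstar a / lam)) := by
    rw [hW]
    apply weighted_chebyshev πβ rstar (fun a => Real.exp (rstar a / lam))
      (fun a => (hpos a).le) hsum
    intro a b
    rcases le_total (rstar a) (rstar b) with hab | hab
    · have h1 : Real.exp (rstar a / lam) ≤ Real.exp (rstar b / lam) :=
        Real.exp_le_exp.2 ((div_le_div_iff_of_pos_right hlam).2 hab)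
      nlinarith
    · have h1 : Real.exp (rstar b / lam) ≤ Real.exp (rstar a / lam) :=
        Real.exp_le_exp.2 ((div_le_div_iff_of_pos_right hlam).2 hab)
      nlinarith
  set S : ℝ := ∑ a, πβ a * rstar a with hS
  have hSnn : 0 ≤ S := Finset.sum_nonneg fun a _ => mul_nonneg (hpos a).le (hr a).1
  have hSle : S ≤ Rmax := by
    calc S ≤ ∑ a, πβ a * Rmax := Finset.sum_le_sum fun a _ =>
            mul_le_mul_of_nonneg_left (hr a).2 (hpos a).le
      _ = Rmax := by rw [← Finset.sum_mul, hsum, one_mul]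
  have hc : 0 ≤ Real.exp (-(2 * ε) / lam) / W := by positivity
  have hstep : Real.exp (-(2 * ε) / lam) * S ≤ ∑ a, πl a * rstar a := by
    have := mul_le_mul_of_nonneg_left hcheb hc
    have heq : Real.exp (-(2 * ε) / lam) / W * (S * W) = Real.exp (-(2 * ε) / lam) * S := by
      field_simp
    linarith [hsum1]
  -- exp(-t) ≥ 1 - t
  have hexp : 1 - 2 * ε / lam ≤ Real.exp (-(2 * ε) / lam) := by
    have h := Real.add_one_le_exp (-(2 * ε) / lam)
    have h2 : -(2 * ε) / lam = -(2 * ε / lam) := by ring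
    rw [h2] at h ⊢
    linarith
  have hfinal : S - 4 * Rmax * ε / lam ≤ Real.exp (-(2 * ε) / lam) * S := by
    have h1 : (1 - 2 * ε / lam) * S ≤ Real.exp (-(2 * ε) / lam) * S :=
      mul_le_mul_of_nonneg_right hexp hSnn
    have h2 : 2 * ε / lam * S ≤ 2 * ε / lam * Rmax :=
      mul_le_mul_of_nonneg_left hSle (by positivity)
    have h3 : 2 * ε / lam * Rmax ≤ 4 * Rmax * ε / lam := by
      have h4 : 0 ≤ Rmax * ε / lam := by positivity
      have h5 : 4 * Rmax * ε / lam = 2 * ε / lam * Rmax + 2 * (Rmax * ε / lam) := by ring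
      linarith
    nlinarith
  linarith
end
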